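/- Let G be a finite simple graph that is 3K₁-free and K₅-free. Then the chromatic number of G satisfies χ(G) ≤ 7. -/

import Mathlib

/-!
Take a coloring with the fewest colors. As `α(G) ≤ 2`, every color class has one or two
vertices. The singleton classes form a clique `D` (two non-adjacent ones could be merged), so
`|D| ≤ 4`, and a regrouping argument shows that every two-vertex class has a vertex adjacent to
all of `D`. Hence `χ ≤ |D| + |N|`, where the common neighbourhood `N` of `D` has no
`(5 - |D|)`-clique, so `R(3, t) ≤ (t + 1).choose 2` gives `|N| ≤ 5, 2, 0` for `|D| = 2, 3, 4`.
For `|D| ≤ 1` use `2χ ≤ n + |D|` and `n ≤ 14` instead.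
-/

open Finset

namespace SimpleGraph

variable {V α : Type*} {G : SimpleGraph V}

theorem adj_of_compl_cliqueFree_three (h : Gᶜ.CliqueFree 3) {x y z : V} (hxy : x ≠ y)
    (hxz : x ≠ z) (hyz : y ≠ z) (hnxy : ¬G.Adj x y) (hnxz : ¬G.Adj x z) : G.Adj y z := by
  classical
  by_contra hnyz
  exact h {x, y, z} (is3Clique_triple_iff.mpr ⟨⟨hxy, hnxy⟩, ⟨hxz, hnxz⟩, ⟨hyz, hnyz⟩⟩)

theorem IsClique.card_lt_of_cliqueFreeOn {s t : Finset V} {n : ℕ} (ht : G.IsClique (t : Set V))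
    (hts : t ⊆ s) (hs : G.CliqueFreeOn s n) : #t < n := by
  by_contra! hn
  obtain ⟨u, hut, hu⟩ := exists_subset_card_eq hn
  exact hs (coe_subset.mpr (hut.trans hts)) ⟨ht.subset (coe_subset.mpr hut), hu⟩

theorem cliqueFreeOn_commonNbhd [Fintype V] [DecidableRel G.Adj] {s : Finset V} {d t : ℕ}
    (hs : G.IsNClique d s) (h : G.CliqueFree (d + t)) :
    G.CliqueFreeOn ({v | ∀ w ∈ s, G.Adj v w} : Finset V) t := by
  classical
  intro u hu hut
  have hadj : ∀ v ∈ u, ∀ w ∈ s, G.Adj v w := fun v hv => by simpa using hu hv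
  have hdisj : Disjoint s u :=
    Finset.disjoint_left.mpr fun v hvs hvu => G.irrefl (hadj v hvu v hvs)
  refine h (s ∪ u) ⟨?_, by rw [card_union_of_disjoint hdisj, hs.card_eq, hut.card_eq]⟩
  rw [coe_union, IsClique, Set.pairwise_union]
  exact ⟨hs.isClique, hut.isClique, fun v hv w hw _ => ⟨(hadj w hw v hv).symm, hadj w hw v hv⟩⟩

/-- The bound `R(3, t) ≤ (t + 1).choose 2`: the non-neighbours of a vertex form a clique
and its neighbours span no `(t - 1)`-clique. -/
theorem two_mul_card_add_two_le_of_cliqueFreeOn (h : Gᶜ.CliqueFree 3) {t : ℕ}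
    {s : Finset V} (hs : G.CliqueFreeOn s t) : 2 * #s + 2 ≤ t * (t + 1) := by
  classical
  induction t generalizing s with
  | zero => exact absurd (isNClique_empty.mpr rfl) (hs (empty_subset _))
  | succ t ih =>
    obtain rfl | ⟨v, hv⟩ := s.eq_empty_or_nonempty
    · simp only [card_empty]; nlinarith
    have hnbr : 2 * #((s.erase v).filter (G.Adj v)) + 2 ≤ t * (t + 1) :=
      ih <| (hs.of_succ _ hv).subset _ fun w hw => by
        simp only [coe_filter, mem_erase] at hw
        exact ⟨hw.1.2, hw.2⟩
    have hnon : #((s.erase v).filter (¬G.Adj v ·)) < t + 1 := by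
      refine IsClique.card_lt_of_cliqueFreeOn (fun x hx y hy hxy => ?_)
        ((filter_subset _ _).trans (erase_subset _ _)) hs
      simp only [coe_filter, mem_erase, Set.mem_ofPred_eq] at hx hy
      exact adj_of_compl_cliqueFree_three h (Ne.symm hx.1.1) (Ne.symm hy.1.1) hxy hx.2 hy.2
    have hcard := card_filter_add_card_filter_not (s := s.erase v) (G.Adj v)
    rw [← card_erase_add_one hv, ← hcard]
    nlinarith

namespace Coloring

section Recolor

variable [DecidableEq V]

def recolor (c : G.Coloring α) (w : V) (i : α) (h : ∀ v, c v = i → ¬G.Adj w v) :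
    G.Coloring α :=
  Coloring.mk (Function.update c w i) fun {x y} hxy => by
    rcases eq_or_ne x w with rfl | hx
    · rw [Function.update_self, Function.update_of_ne hxy.ne.symm]
      exact fun hi => h y hi.symm hxy
    rcases eq_or_ne y w with rfl | hy
    · rw [Function.update_self, Function.update_of_ne hx]
      exact fun hi => h x hi hxy.symm
    rw [Function.update_of_ne hx, Function.update_of_ne hy]
    exact c.valid hxy

@[simp]
theorem recolor_apply (c : G.Coloring α) (w : V) (i : α) (h : ∀ v, c v = i → ¬G.Adj w v)
    (v : V) : c.recolor w i h v = Function.update c w i v :=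
  rfl

end Recolor

variable [Fintype V] [DecidableEq α]

def IsOptimal (c : G.Coloring α) : Prop :=
  ∀ c' : G.Coloring α, #(univ.image c) ≤ #(univ.image c')

theorem exists_isOptimal [Nonempty (G.Coloring α)] : ∃ c : G.Coloring α, c.IsOptimal :=
  ⟨Function.argmin fun c : G.Coloring α => #(univ.image c),
    fun c' => Function.argmin_le (fun c : G.Coloring α => #(univ.image c)) c'⟩

theorem colorable_card_image (c : G.Coloring α) : G.Colorable #(univ.image c) := by
  simpa using (Coloring.mk (fun v => (⟨c v, mem_image_of_mem c (mem_univ v)⟩ : univ.image c))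
    fun hvw h => c.valid hvw (congrArg Subtype.val h)).colorable

theorem IsOptimal.exists_apply_eq {c c' : G.Coloring α} (hc : c.IsOptimal)
    (h : univ.image c' ⊆ univ.image c) (v : V) : ∃ x, c' x = c v := by
  have hv := mem_image_of_mem c (mem_univ v)
  rw [← eq_of_subset_of_card_le h (hc c')] at hv
  simpa using hv

open Classical in
noncomputable def singletonClassVerts (c : G.Coloring α) : Finset V :=
  univ.filter fun v => ∀ w, c w = c v → w = v

theorem mem_singletonClassVerts {c : G.Coloring α} {v : V} :
    v ∈ c.singletonClassVerts ↔ ∀ w, c w = c v → w = v := by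
  simp [singletonClassVerts]

theorem two_mul_card_image_le (c : G.Coloring α) :
    2 * #(univ.image c) ≤ Fintype.card V + #c.singletonClassVerts := by
  classical
  calc 2 * #(univ.image c) = #(univ.image c) • 2 := by rw [smul_eq_mul, mul_comm]
    _ ≤ ∑ i ∈ univ.image c, (#{v | c v = i} + #{v ∈ c.singletonClassVerts | c v = i}) := by
      refine card_nsmul_le_sum _ _ _ fun i hi => ?_
      obtain ⟨v, -, rfl⟩ := mem_image.mp hi
      by_cases hv : v ∈ c.singletonClassVerts
      · have h1 : 1 ≤ #{w | c w = c v} := card_pos.mpr ⟨v, by simp⟩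
        have h2 : 1 ≤ #{w ∈ c.singletonClassVerts | c w = c v} := card_pos.mpr ⟨v, by simp [hv]⟩
        omega
      · obtain ⟨y, hy, hyv⟩ : ∃ y, c y = c v ∧ y ≠ v := by
          simpa [mem_singletonClassVerts] using hv
        have h2 : 2 ≤ #{w | c w = c v} := by
          rw [← card_pair hyv]
          exact card_le_card fun w hw => by
            rcases mem_insert.mp hw with rfl | hw
            · simpa using hy
            · simp [mem_singleton.mp hw]
        omega
    _ = Fintype.card V + #c.singletonClassVerts := by
      rw [sum_add_distrib, ← card_eq_sum_card_fiberwise fun v _ => mem_image_of_mem c (mem_univ v),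
        ← card_eq_sum_card_fiberwise fun v _ => mem_image_of_mem c (mem_univ v), card_univ]

section

variable [DecidableEq V]

theorem image_recolor_subset (c : G.Coloring α) (w u : V) (h : ∀ v, c v = c u → ¬G.Adj w v) :
    univ.image (c.recolor w (c u) h) ⊆ univ.image c := by
  intro i
  simp only [mem_image, mem_univ, true_and, recolor_apply, forall_exists_index]
  rintro v rfl
  rcases eq_or_ne v w with rfl | hv
  · exact ⟨u, by rw [Function.update_self]⟩
  · exact ⟨v, by rw [Function.update_of_ne hv]⟩

theorem IsOptimal.isClique_singletonClassVerts {c : G.Coloring α} (hc : c.IsOptimal) :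
    G.IsClique (c.singletonClassVerts : Set V) := by
  intro u hu w hw huw
  by_contra hnadj
  rw [mem_coe, mem_singletonClassVerts] at hu hw
  have hmove : ∀ v, c v = c u → ¬G.Adj w v := fun v hv => hu v hv ▸ fun h => hnadj h.symm
  obtain ⟨x, hx⟩ := hc.exists_apply_eq (c.image_recolor_subset w u hmove) w
  rcases eq_or_ne x w with rfl | hxw
  · simp only [recolor_apply, Function.update_self] at hx
    exact huw (hu x hx.symm).symm
  · simp only [recolor_apply, Function.update_of_ne hxw] at hx
    exact hxw (hw x hx)

/-- In an optimal coloring with independence number at most two, each two-vertex color class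
has a vertex adjacent to every singleton class: otherwise its vertices `v, y` have non-neighbours
`a ≠ b` among the singletons, and the classes `{v, y}, {a}, {b}` can be regrouped as
`{v, a}, {y, b}`. -/
theorem IsOptimal.exists_apply_eq_and_mem_or_forall_adj {c : G.Coloring α} (hc : c.IsOptimal)
    (h3 : Gᶜ.CliqueFree 3) (v : V) : ∃ y, c y = c v ∧
      (y ∈ c.singletonClassVerts ∨ ∀ a ∈ c.singletonClassVerts, G.Adj y a) := by
  by_cases hv : v ∈ c.singletonClassVerts
  · exact ⟨v, rfl, .inl hv⟩
  obtain ⟨y, hyv, hy⟩ : ∃ y, c y = c v ∧ y ≠ v := by simpa [mem_singletonClassVerts] using hv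
  by_contra! hfull
  obtain ⟨-, a, ha, hva⟩ := hfull v rfl
  obtain ⟨hyD, b, hb, hyb⟩ := hfull y hyv
  have hav : a ≠ v := ne_of_mem_of_not_mem ha hv
  have hbv : b ≠ v := ne_of_mem_of_not_mem hb hv
  have hnvy : ¬G.Adj v y := fun h => c.valid h hyv.symm
  have hab : a ≠ b := by
    rintro rfl
    exact hva (adj_of_compl_cliqueFree_three h3 hy (ne_of_mem_of_not_mem ha hyD).symm hav.symm
      (fun h => hnvy h.symm) hyb)
  rw [mem_singletonClassVerts] at ha hb
  have hmove₁ : ∀ x, c x = c a → ¬G.Adj v x := fun x hx => ha x hx ▸ hva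
  let c₁ := c.recolor v (c a) hmove₁
  have hc₁b : c₁ b = c b := by simp [c₁, Function.update_of_ne hbv]
  have hmove₂ : ∀ x, c₁ x = c₁ b → ¬G.Adj y x := fun x hx => by
    rcases eq_or_ne x v with rfl | hxv
    · simp only [c₁, hc₁b, recolor_apply, Function.update_self] at hx
      exact absurd (hb a hx) hab
    · simp only [c₁, hc₁b, recolor_apply, Function.update_of_ne hxv] at hx
      exact hb x hx ▸ hyb
  -- after moving `v` to `a` and `y` to `b`, some vertex `x` must still carry the color `c v`
  obtain ⟨x, hx⟩ := hc.exists_apply_eq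
    ((c₁.image_recolor_subset y b hmove₂).trans (c.image_recolor_subset v a hmove₁)) v
  rcases eq_or_ne x y with rfl | hxy
  · simp only [hc₁b, recolor_apply, Function.update_self] at hx
    exact hbv (hb v hx.symm).symm
  rcases eq_or_ne x v with rfl | hxv
  · simp only [c₁, recolor_apply, Function.update_of_ne hxy, Function.update_self] at hx
    exact hav (ha x hx.symm).symm
  simp only [c₁, recolor_apply, Function.update_of_ne hxy, Function.update_of_ne hxv] at hx
  exact c.valid (adj_of_compl_cliqueFree_three h3 hxy hxv hy
    (fun h => c.valid h (hx.trans hyv.symm)) (fun h => c.valid h hx)) hyv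

end

theorem IsOptimal.card_image_le [DecidableRel G.Adj] {c : G.Coloring α} (hc : c.IsOptimal)
    (h3 : Gᶜ.CliqueFree 3) : #(univ.image c) ≤
      #c.singletonClassVerts + #{v | ∀ w ∈ c.singletonClassVerts, G.Adj v w} := by
  set D := c.singletonClassVerts
  set N : Finset V := {v | ∀ w ∈ D, G.Adj v w}
  classical
  calc #(univ.image c) = #((D ∪ N).image c) := by
        refine congrArg card (Subset.antisymm (fun i hi => ?_) (image_subset_image (subset_univ _)))
        obtain ⟨v, -, rfl⟩ := mem_image.mp hi
        obtain ⟨y, hy, hyD⟩ := hc.exists_apply_eq_and_mem_or_forall_adj h3 v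
        exact mem_image.mpr ⟨y, by simpa [N] using hyD, hy⟩
    _ ≤ #D + #N := Finset.card_image_le.trans (card_union_le _ _)

end Coloring

end SimpleGraph

open SimpleGraph

/-- If `G` is a finite simple graph that is `3K₁`-free (no independent set
of size 3, i.e. its complement is triangle-free) and `K_5`-free, then
`χ(G) ≤ 7`. -/
theorem chromatic_bound_K5 (V : Type*) [Fintype V] (G : SimpleGraph V)
    (h3K1 : Gᶜ.CliqueFree 3) (hKfree : G.CliqueFree 5) :
    G.chromaticNumber ≤ 7 := by
  classical
  have : Nonempty (G.Coloring V) := ⟨G.selfColoring⟩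
  obtain ⟨c, hc⟩ := Coloring.exists_isOptimal (G := G) (α := V)
  have hD5 : #c.singletonClassVerts < 5 :=
    hc.isClique_singletonClassVerts.card_lt_of_cliqueFreeOn (subset_univ _) hKfree.cliqueFreeOn
  have hN := two_mul_card_add_two_le_of_cliqueFreeOn h3K1 <| cliqueFreeOn_commonNbhd
    ⟨hc.isClique_singletonClassVerts, rfl⟩ (t := 5 - #c.singletonClassVerts)
    (by rwa [Nat.add_sub_cancel' hD5.le])
  have hV : 2 * #(univ : Finset V) + 2 ≤ 5 * (5 + 1) :=
    two_mul_card_add_two_le_of_cliqueFreeOn h3K1 hKfree.cliqueFreeOn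
  have hk := hc.card_image_le h3K1
  have h2k := c.two_mul_card_image_le
  rw [← card_univ] at h2k
  have hk7 : #(univ.image c) ≤ 7 := by interval_cases #c.singletonClassVerts <;> omega
  exact_mod_cast (c.colorable_card_image.mono hk7).chromaticNumber_le
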